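/- arXiv:1910.11166 — 2 statements merged into one kernel-verified Lean document; each statement's English description precedes it below -/
import Mathlib

section
/- Let 𝒜 be the algebra of piecewise constant functions on ℝ with jumps at most at t₁ < ⋯ < t_N, σ : ℝ → ℝ a bijection such that 𝒜 is invariant under σ and σ⁻¹, and σ̃ the induced automorphism of 𝒜. Then the unique maximal commutative subalgebra of 𝒜⋊_σ̃ℤ containing 𝒜 is 𝒜′ = {Σ_{n∈ℤ} fₙδⁿ : for every n ∈ ℤ and every positive integer k with k ∤ n, fₙ vanishes identically on C_k}. -/
open scoped Classical

noncomputable section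

namespace PaperTRS

/-- The algebra of complex valued functions constant on each set of the family `P`. -/
def partAlg {X J : Type*} (P : J → Set X) : Subalgebra ℂ (X → ℂ) where
  carrier := {h | ∀ i, ∀ x ∈ P i, ∀ y ∈ P i, h x = h y}
  mul_mem' := by
    intro a b ha hb i x hx y hy
    simp only [Pi.mul_apply, ha i x hx y hy, hb i x hx y hy]
  add_mem' := by
    intro a b ha hb i x hx y hy
    simp only [Pi.add_apply, ha i x hx y hy, hb i x hx y hy]
  algebraMap_mem' := by intro r i x hx y hy; rfl

/-- Piecewise constant functions on `ℝ` whose jumps all lie in the set `T`. -/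
def pcAlgOn (T : Set ℝ) : Subalgebra ℂ (ℝ → ℂ) where
  carrier := {h | ∀ x y : ℝ, x ∉ T → y ∉ T →
    (∀ u ∈ T, u ∉ Set.Icc (min x y) (max x y)) → h x = h y}
  mul_mem' := by
    intro a b ha hb x y hx hy hxy
    simp only [Pi.mul_apply, ha x y hx hy hxy, hb x y hx hy hxy]
  add_mem' := by
    intro a b ha hb x y hx hy hxy
    simp only [Pi.add_apply, ha x y hx hy hxy, hb x y hx hy hxy]
  algebraMap_mem' := by intro r x y _ _ _; rfl

/-- Invariance of an algebra of functions under a self-map of `X`. -/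
def AlgInvariant {X : Type*} (A : Subalgebra ℂ (X → ℂ)) (σ : X → X) : Prop :=
  ∀ h ∈ A, (h ∘ σ) ∈ A

/-- `Sep A σ n = {x | ∃ h ∈ A, h x ≠ σ̃ⁿ(h) x}`, where `σ̃ⁿ(h) = h ∘ σ⁻ⁿ`. -/
def Sep {X : Type*} (A : Subalgebra ℂ (X → ℂ)) (σ : Equiv.Perm X) (n : ℤ) : Set X :=
  {x | ∃ h ∈ A, h x ≠ h ((σ ^ n)⁻¹ x)}

/-- Twisted convolution product on the crossed product `⋊ ℤ`:
`(fₙ δⁿ) * (gₘ δᵐ) = fₙ · σ̃ⁿ(gₘ) · δ^{n+m}` extended bilinearly. -/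
def cmul {X : Type*} (σ : Equiv.Perm X) (f g : ℤ →₀ (X → ℂ)) : ℤ →₀ (X → ℂ) :=
  f.sum fun n a => g.sum fun m b =>
    Finsupp.single (n + m) (fun x => a x * b ((σ ^ n)⁻¹ x))

/-- Membership of an element `Σ fₙ δⁿ` in the crossed product of the algebra `B` with `ℤ`. -/
def InCrossed {X : Type*} (B : Subalgebra ℂ (X → ℂ)) (f : ℤ →₀ (X → ℂ)) : Prop :=
  ∀ n, f n ∈ B

/-- The commutant of `A` inside the crossed product `B ⋊ ℤ` (where `A ⊆ B`). -/
def commutant {X : Type*} (A B : Subalgebra ℂ (X → ℂ)) (σ : Equiv.Perm X) :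
    Set (ℤ →₀ (X → ℂ)) :=
  {f | InCrossed B f ∧
    ∀ a ∈ A, cmul σ f (Finsupp.single 0 a) = cmul σ (Finsupp.single 0 a) f}

/-- The jump points `t₁ < ⋯ < t_N` extended by `t₀ = -∞` and `t_{N+1} = +∞`. -/
def tE (N : ℕ) (t : Fin N → ℝ) (i : ℕ) : EReal :=
  if h : 1 ≤ i ∧ i ≤ N then ((t ⟨i - 1, by omega⟩ : ℝ) : EReal)
  else if i = 0 then ⊥ else ⊤

/-- The open interval `I_i = (t_i, t_{i+1})` for `0 ≤ i ≤ N`. -/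
def openPiece (N : ℕ) (t : Fin N → ℝ) (i : ℕ) : Set ℝ :=
  {x : ℝ | tE N t i < (x : EReal) ∧ (x : EReal) < tE N t (i + 1)}

/-- The sets of the partition of `ℝ` determined by the jump points: the open
intervals `I_0, …, I_N` together with the singletons `{t_i}`. -/
def pieces (N : ℕ) (t : Fin N → ℝ) : Set (Set ℝ) :=
  {P | (∃ i : ℕ, i ≤ N ∧ P = openPiece N t i) ∨ (∃ i : Fin N, P = {t i})}

/-- `C_k`: points `x` such that `k` is the smallest positive integer with `x` and
`σᵏ(x)` in one common set of the partition. -/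
def Ck (N : ℕ) (t : Fin N → ℝ) (σ : Equiv.Perm ℝ) (k : ℕ) : Set ℝ :=
  {x | IsLeast {j : ℕ | 0 < j ∧ ∃ P ∈ pieces N t, x ∈ P ∧ (σ ^ j) x ∈ P} k}

end PaperTRS
namespace PaperTRS

/-- With `p` points `s i 0 < ⋯ < s i (p-1)` added in the interval `I_{α i}`, the `j`-th
open subinterval of the refined partition of `I_{α i}`, for `j = 0, …, p`. -/
def subPiece (N : ℕ) (t : Fin N → ℝ) {k p : ℕ} (α : Fin k → ℕ)
    (s : Fin k → Fin p → ℝ) (i : Fin k) (j : Fin (p + 1)) : Set ℝ :=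
  {x : ℝ |
    (if hj : (j : ℕ) = 0 then tE N t (α i)
      else ((s i ⟨(j : ℕ) - 1, by have := j.isLt; omega⟩ : ℝ) : EReal)) < (x : EReal) ∧
    (x : EReal) <
      (if hj : (j : ℕ) = p then tE N t (α i + 1)
        else ((s i ⟨(j : ℕ), by have := j.isLt; omega⟩ : ℝ) : EReal))}

/-- The sets of the refined partition of the union of the intervals `I_{α i}`: the open
subintervals determined by the added jump points together with the singleton jump points. -/
def cyclePieces (N : ℕ) (t : Fin N → ℝ) {k p : ℕ} (α : Fin k → ℕ)
    (s : Fin k → Fin p → ℝ) : Set (Set ℝ) :=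
  {P | (∃ i j, P = subPiece N t α s i j) ∨ (∃ i j, P = ({s i j} : Set ℝ))}

/-- `C̃_r`: points `x` of `⋃ᵢ I_{α i}` such that `r` is the smallest positive integer with
`x` and `σʳ(x)` in one common set of the refined partition. -/
def Ctil (N : ℕ) (t : Fin N → ℝ) (σ : Equiv.Perm ℝ) {k p : ℕ} (α : Fin k → ℕ)
    (s : Fin k → Fin p → ℝ) (r : ℕ) : Set ℝ :=
  {x | x ∈ ⋃ i, openPiece N t (α i) ∧
    IsLeast {j : ℕ | 0 < j ∧ ∃ P ∈ cyclePieces N t α s, x ∈ P ∧ (σ ^ j) x ∈ P} r}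

/-- The cyclic setup: `k` pairwise distinct open intervals `I_{α 0}, …, I_{α (k-1)}` of the
original partition, contained in `C_k` and permuted cyclically by `σ`, with `p` jump points
`s i 0 < ⋯ < s i (p-1)` added into each of them, and both the original algebra `𝒜` and the
refined algebra `𝒜_S` invariant under `σ` and `σ⁻¹`. -/
def CyclicSetup (N : ℕ) (t : Fin N → ℝ) (σ : Equiv.Perm ℝ) {k p : ℕ} (α : Fin k → ℕ)
    (s : Fin k → Fin p → ℝ) : Prop :=
  0 < k ∧ (∀ i, α i ≤ N) ∧ Function.Injective α ∧
  (∀ i j, s i j ∈ openPiece N t (α i)) ∧ (∀ i, StrictMono (s i)) ∧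
  (∀ i : Fin k, ∃ i' : Fin k, ((i' : ℕ) = ((i : ℕ) + 1) % k) ∧
    σ '' openPiece N t (α i) = openPiece N t (α i')) ∧
  (∀ i, openPiece N t (α i) ⊆ Ck N t σ k) ∧
  AlgInvariant (pcAlgOn (Set.range t)) σ ∧
  AlgInvariant (pcAlgOn (Set.range t)) σ.symm ∧
  AlgInvariant (pcAlgOn (Set.range t ∪ ⋃ i, Set.range (s i))) σ ∧
  AlgInvariant (pcAlgOn (Set.range t ∪ ⋃ i, Set.range (s i))) σ.symm

/-- `C_k` for the partition `P` of a general set `X`. -/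
def CkGen {X ι : Type*} (P : ι → Set X) (σ : Equiv.Perm X) (k : ℕ) : Set X :=
  {x | IsLeast {j : ℕ | 0 < j ∧ ∃ i, x ∈ P i ∧ (σ ^ j) x ∈ P i} k}

/-- `C̃_r` relative to a family `Q` of refined pieces inside the subset `base` of `X`. -/
def CtilGen {X ι : Type*} (σ : Equiv.Perm X) (Q : ι → Set X) (base : Set X) (r : ℕ) :
    Set X :=
  {x | x ∈ base ∧ IsLeast {j : ℕ | 0 < j ∧ ∃ i, x ∈ Q i ∧ (σ ^ j) x ∈ Q i} r}

/-- `C_∞`: points that never return to the partition set they lie in. -/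
def Cinf {X ι : Type*} (P : ι → Set X) (σ : Equiv.Perm X) : Set X :=
  {x | ∀ k : ℕ, 0 < k → ¬∃ i, x ∈ P i ∧ (σ ^ k) x ∈ P i}

end PaperTRS
namespace PaperTRS

section Aux

variable {N : ℕ} {t : Fin N → ℝ}

lemma tE_top {i : ℕ} (hi : N < i) : tE N t i = ⊤ := by
  unfold tE; rw [dif_neg (by omega), if_neg (by omega)]

lemma tE_zero : tE N t 0 = ⊥ := by
  unfold tE; rw [dif_neg (by omega), if_pos rfl]

lemma tE_coe {i : ℕ} (h1 : 1 ≤ i) (h2 : i ≤ N) :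
    tE N t i = ((t ⟨i - 1, by omega⟩ : ℝ) : EReal) := by
  unfold tE; rw [dif_pos ⟨h1, h2⟩]

lemma tE_mono (ht : StrictMono t) : Monotone (tE N t) := by
  intro a b hab
  rcases Nat.eq_zero_or_pos a with ha | ha
  · rw [ha, tE_zero]; exact bot_le
  rcases le_or_gt b N with hb | hb
  · rw [tE_coe ha (le_trans hab hb), tE_coe (le_trans ha hab) hb]
    exact EReal.coe_le_coe_iff.2 (ht.monotone (by simp; omega))
  · rw [tE_top hb]; exact le_top

end Aux
section Aux2
variable {N : ℕ} {t : Fin N → ℝ}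

/-- number of jump points strictly below `x` -/
noncomputable def cnt (t : Fin N → ℝ) (x : ℝ) : ℕ :=
  (Finset.univ.filter (fun j : Fin N => t j < x)).card

lemma cnt_le (x : ℝ) : cnt t x ≤ N := by
  simpa [cnt] using (Finset.card_filter_le Finset.univ _).trans (by simp)

lemma lt_cnt_iff (ht : StrictMono t) (x : ℝ) (j : Fin N) :
    t j < x ↔ (j : ℕ) < cnt t x := by
  constructor
  · intro hj
    have hsub : Finset.Iic j ⊆ Finset.univ.filter (fun j' : Fin N => t j' < x) := by
      intro j' hj'
      simp only [Finset.mem_Iic] at hj'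
      simp only [Finset.mem_filter, Finset.mem_univ, true_and]
      exact lt_of_le_of_lt (ht.monotone hj') hj
    have := Finset.card_le_card hsub
    rw [Fin.card_Iic] at this
    exact this
  · intro hj
    by_contra hx
    have hsub : Finset.univ.filter (fun j' : Fin N => t j' < x) ⊆ Finset.Iio j := by
      intro j' hj'
      simp only [Finset.mem_filter, Finset.mem_univ, true_and] at hj'
      simp only [Finset.mem_Iio]
      by_contra hle
      exact hx (lt_of_le_of_lt (ht.monotone (le_of_not_gt hle)) hj')
    have := Finset.card_le_card hsub
    rw [Fin.card_Iio] at this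
    exact absurd hj (not_lt.2 this)

lemma mem_openPiece_cnt (ht : StrictMono t) {x : ℝ} (hx : x ∉ Set.range t) :
    x ∈ openPiece N t (cnt t x) := by
  constructor
  · rcases Nat.eq_zero_or_pos (cnt t x) with h0 | h0
    · rw [h0, tE_zero]; exact Ne.bot_lt (by simp)
    · rw [tE_coe h0 (cnt_le x)]
      exact EReal.coe_lt_coe_iff.2 ((lt_cnt_iff ht x _).2 (show cnt t x - 1 < cnt t x by omega))
  · rcases lt_or_ge (cnt t x) N with hN | hN
    · rw [tE_coe (by omega) (by omega)]
      refine EReal.coe_lt_coe_iff.2 ?_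
      have h1 : ¬ t ⟨cnt t x, hN⟩ < x := by
        rw [lt_cnt_iff ht x]; simp
      have h2 : t ⟨cnt t x, hN⟩ ≠ x := fun h => hx ⟨_, h⟩
      cases (lt_or_eq_of_le (le_of_not_gt h1)) with
      | inl h => exact h
      | inr h => exact absurd h h2.symm
    · rw [tE_top (by omega)]; exact lt_top_iff_ne_top.2 (by simp)

lemma openPiece_not_range (ht : StrictMono t) {x : ℝ} {i : ℕ}
    (hx : x ∈ openPiece N t i) : x ∉ Set.range t := by
  rintro ⟨j, rfl⟩
  obtain ⟨h1, h2⟩ := hx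
  have hj : tE N t ((j : ℕ) + 1) = ((t j : ℝ) : EReal) := by
    rw [tE_coe (by omega) (by omega)]
    norm_num
  rcases le_or_gt ((j : ℕ) + 1) i with h | h
  · exact absurd (lt_of_le_of_lt (hj ▸ tE_mono ht h) h1) (lt_irrefl _)
  · exact absurd (lt_of_lt_of_le h2 (hj ▸ tE_mono ht (by omega))) (lt_irrefl _)

lemma openPiece_unique (ht : StrictMono t) {x : ℝ} {i i' : ℕ}
    (h : x ∈ openPiece N t i) (h' : x ∈ openPiece N t i') : i = i' := by
  by_contra hne
  rcases Nat.lt_or_ge i i' with hlt | hge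
  · exact absurd (lt_trans (lt_of_lt_of_le h.2 (tE_mono ht hlt)) h'.1) (lt_irrefl _)
  · have hlt : i' < i := by omega
    exact absurd (lt_trans (lt_of_lt_of_le h'.2 (tE_mono ht hlt)) h.1) (lt_irrefl _)

end Aux2
section Aux3
variable {N : ℕ} {t : Fin N → ℝ}

lemma cnt_eq (ht : StrictMono t) {u v : ℝ} (hu : u ∉ Set.range t) (hv : v ∉ Set.range t)
    (huv : ∀ w ∈ Set.range t, w ∉ Set.Icc (min u v) (max u v)) : cnt t u = cnt t v := by
  have key : ∀ j : Fin N, t j < u ↔ t j < v := by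
    intro j
    have hj := huv (t j) ⟨j, rfl⟩
    simp only [Set.mem_Icc, not_and_or, not_le] at hj
    constructor
    · intro h
      by_contra h'
      have h1 : v ≤ t j := le_of_not_gt h'
      rcases hj with h2 | h2
      · exact absurd (le_trans (min_le_right u v) h1) (not_le.2 h2)
      · exact absurd (lt_of_lt_of_le h (le_max_left u v)) (not_lt.2 (le_of_lt h2))
    · intro h
      by_contra h'
      have h1 : u ≤ t j := le_of_not_gt h'
      rcases hj with h2 | h2
      · exact absurd (le_trans (min_le_left u v) h1) (not_le.2 h2)
      · exact absurd (lt_of_lt_of_le h (le_max_right u v)) (not_lt.2 (le_of_lt h2))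
  unfold cnt
  congr 1
  ext j
  simp [key j]

lemma mem_openPiece_iff (ht : StrictMono t) {x : ℝ} (hx : x ∉ Set.range t) (i : ℕ) :
    x ∈ openPiece N t i ↔ i = cnt t x :=
  ⟨fun h => openPiece_unique ht h (mem_openPiece_cnt ht hx),
   fun h => h ▸ mem_openPiece_cnt ht hx⟩

/-- indicator function of a piece is in the algebra -/
lemma indicator_mem (ht : StrictMono t) {P : Set ℝ} (hP : P ∈ pieces N t) :
    (fun z => if z ∈ P then (1 : ℂ) else 0) ∈ pcAlgOn (Set.range t) := by
  intro u v hu hv huv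
  have hmem : u ∈ P ↔ v ∈ P := by
    rcases hP with ⟨i, hi, rfl⟩ | ⟨i, rfl⟩
    · rw [mem_openPiece_iff ht hu, mem_openPiece_iff ht hv, cnt_eq ht hu hv huv]
    · simp only [Set.mem_singleton_iff]
      constructor
      · rintro rfl; exact absurd ⟨i, rfl⟩ hu
      · rintro rfl; exact absurd ⟨i, rfl⟩ hv
  simp only [hmem]

lemma const_on_piece (ht : StrictMono t) {h : ℝ → ℂ} (hh : h ∈ pcAlgOn (Set.range t))
    {P : Set ℝ} (hP : P ∈ pieces N t) {x y : ℝ} (hx : x ∈ P) (hy : y ∈ P) : h x = h y := by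
  rcases hP with ⟨i, hi, rfl⟩ | ⟨i, rfl⟩
  · refine hh x y (openPiece_not_range ht hx) (openPiece_not_range ht hy) ?_
    rintro w ⟨j, rfl⟩
    simp only [Set.mem_Icc, not_and_or, not_le]
    have hj : tE N t ((j : ℕ) + 1) = ((t j : ℝ) : EReal) := by
      rw [tE_coe (by omega) (by omega)]
      norm_num
    rcases le_or_gt ((j : ℕ) + 1) i with hle | hlt
    · left
      have h1 : ((t j : ℝ) : EReal) ≤ tE N t i := hj ▸ tE_mono ht hle
      have hx1 : ((t j : ℝ) : EReal) < (x : EReal) := lt_of_le_of_lt h1 hx.1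
      have hy1 : ((t j : ℝ) : EReal) < (y : EReal) := lt_of_le_of_lt h1 hy.1
      rw [EReal.coe_lt_coe_iff] at hx1 hy1
      exact lt_min hx1 hy1
    · right
      have h1 : tE N t (i + 1) ≤ ((t j : ℝ) : EReal) := hj ▸ tE_mono ht (by omega)
      have hx1 : (x : EReal) < ((t j : ℝ) : EReal) := lt_of_lt_of_le hx.2 h1
      have hy1 : (y : EReal) < ((t j : ℝ) : EReal) := lt_of_lt_of_le hy.2 h1
      rw [EReal.coe_lt_coe_iff] at hx1 hy1
      exact max_lt hx1 hy1
  · simp only [Set.mem_singleton_iff] at hx hy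
    rw [hx, hy]

lemma exists_piece (ht : StrictMono t) (x : ℝ) : ∃ P ∈ pieces N t, x ∈ P := by
  by_cases hx : x ∈ Set.range t
  · obtain ⟨j, rfl⟩ := hx
    exact ⟨{t j}, Or.inr ⟨j, rfl⟩, rfl⟩
  · exact ⟨openPiece N t (cnt t x), Or.inl ⟨cnt t x, cnt_le x, rfl⟩, mem_openPiece_cnt ht hx⟩

end Aux3
section Aux4
variable {N : ℕ} {t : Fin N → ℝ} {σ : Equiv.Perm ℝ}

/-- two points are not separated by the algebra -/
def Rel (t : Fin N → ℝ) (x y : ℝ) : Prop :=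
  ∀ h ∈ pcAlgOn (Set.range t), h x = h y

lemma rel_refl (x : ℝ) : Rel t x x := fun _ _ => rfl
lemma rel_symm {x y : ℝ} (h : Rel t x y) : Rel t y x := fun g hg => (h g hg).symm
lemma rel_trans {x y z : ℝ} (h : Rel t x y) (h' : Rel t y z) : Rel t x z :=
  fun g hg => (h g hg).trans (h' g hg)

lemma rel_iff_samePiece (ht : StrictMono t) (x y : ℝ) :
    Rel t x y ↔ ∃ P ∈ pieces N t, x ∈ P ∧ y ∈ P := by
  constructor
  · intro hrel
    obtain ⟨P, hP, hx⟩ := exists_piece ht x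
    refine ⟨P, hP, hx, ?_⟩
    by_contra hy
    have := hrel _ (indicator_mem ht hP)
    rw [if_pos hx, if_neg hy] at this
    exact one_ne_zero this
  · rintro ⟨P, hP, hx, hy⟩ h hh
    exact const_on_piece ht hh hP hx hy

lemma alg_inv_zpow (hinv : AlgInvariant (pcAlgOn (Set.range t)) σ)
    (hinv' : AlgInvariant (pcAlgOn (Set.range t)) σ.symm) (n : ℤ) :
    AlgInvariant (pcAlgOn (Set.range t)) ((σ ^ n : Equiv.Perm ℝ) : ℝ → ℝ) := by
  induction n using Int.induction_on with
  | zero => intro h hh; simpa using hh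
  | succ k ih =>
      intro h hh
      have : (h ∘ (σ ^ (k : ℤ) : Equiv.Perm ℝ)) ∘ σ ∈ pcAlgOn (Set.range t) :=
        hinv _ (ih h hh)
      convert this using 1
      funext x
      simp only [Function.comp_apply]
      rw [zpow_add_one]
      rfl
  | pred k ih =>
      intro h hh
      have : (h ∘ (σ ^ (-(k : ℤ)) : Equiv.Perm ℝ)) ∘ σ.symm ∈ pcAlgOn (Set.range t) :=
        hinv' _ (ih h hh)
      convert this using 1
      funext x
      simp only [Function.comp_apply]
      congr 1
      rw [show (-(k : ℤ) - 1) = -(k : ℤ) + (-1) by ring, zpow_add, zpow_neg_one]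
      rfl

lemma rel_zpow (hinv : AlgInvariant (pcAlgOn (Set.range t)) σ)
    (hinv' : AlgInvariant (pcAlgOn (Set.range t)) σ.symm) (n : ℤ) {x y : ℝ}
    (h : Rel t x y) : Rel t ((σ ^ n) x) ((σ ^ n) y) := by
  intro g hg
  exact h (g ∘ (σ ^ n : Equiv.Perm ℝ)) (alg_inv_zpow hinv hinv' n g hg)

end Aux4
section Aux5
variable {N : ℕ} {t : Fin N → ℝ} {σ : Equiv.Perm ℝ}

/-- index of the piece containing `x` -/
noncomputable def pidx (t : Fin N → ℝ) (x : ℝ) : ℕ :=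
  if h : ∃ j, t j = x then N + 1 + (h.choose : ℕ) else cnt t x

lemma pidx_le (x : ℝ) : pidx t x ≤ 2 * N := by
  unfold pidx
  split_ifs with h
  · have := h.choose.isLt
    omega
  · have := cnt_le (t := t) x
    omega

lemma pidx_eq_samePiece (ht : StrictMono t) {x y : ℝ} (hxy : pidx t x = pidx t y) :
    ∃ P ∈ pieces N t, x ∈ P ∧ y ∈ P := by
  unfold pidx at hxy
  split_ifs at hxy with h1 h2 h2
  · have hj : h1.choose = h2.choose := Fin.ext (by omega)
    refine ⟨{t h1.choose}, Or.inr ⟨h1.choose, rfl⟩, ?_, ?_⟩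
    · exact (h1.choose_spec).symm
    · rw [hj]; exact (h2.choose_spec).symm
  · have := h1.choose.isLt
    have := cnt_le (t := t) y
    omega
  · have := h2.choose.isLt
    have := cnt_le (t := t) x
    omega
  · have hx : x ∉ Set.range t := fun ⟨j, hj⟩ => h1 ⟨j, hj⟩
    have hy : y ∉ Set.range t := fun ⟨j, hj⟩ => h2 ⟨j, hj⟩
    refine ⟨openPiece N t (cnt t x), Or.inl ⟨cnt t x, cnt_le x, rfl⟩,
      mem_openPiece_cnt ht hx, ?_⟩
    rw [hxy]
    exact mem_openPiece_cnt ht hy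

lemma exists_return (ht : StrictMono t)
    (hinv : AlgInvariant (pcAlgOn (Set.range t)) σ)
    (hinv' : AlgInvariant (pcAlgOn (Set.range t)) σ.symm) (x : ℝ) :
    ∃ k : ℕ, 0 < k ∧ Rel t x ((σ ^ (k : ℤ)) x) := by
  have hmap : ∀ i ∈ Finset.range (2 * N + 2),
      pidx t ((σ ^ (i : ℤ)) x) ∈ Finset.range (2 * N + 1) := by
    intro i _
    simp only [Finset.mem_range]
    have := pidx_le (t := t) ((σ ^ (i : ℤ)) x)
    omega
  obtain ⟨i, hi, j, hj, hij, heq⟩ :=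
    Finset.exists_ne_map_eq_of_card_lt_of_maps_to (by simp) hmap
  rcases Nat.lt_or_ge i j with hlt | hge
  · refine ⟨j - i, by omega, ?_⟩
    have hrel : Rel t ((σ ^ (i : ℤ)) x) ((σ ^ (j : ℤ)) x) :=
      (rel_iff_samePiece ht _ _).2 (pidx_eq_samePiece ht heq)
    have := rel_zpow hinv hinv' (-(i : ℤ)) hrel
    have harr : ∀ m n : ℤ, (σ ^ m) ((σ ^ n) x) = (σ ^ (m + n)) x := by
      intro m n; rw [zpow_add]; rfl
    rw [harr, harr] at this
    simpa [show -(i:ℤ) + i = 0 by ring, show -(i:ℤ) + j = ((j - i : ℕ) : ℤ) by omega]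
      using this
  · have hlt : j < i := by omega
    refine ⟨i - j, by omega, ?_⟩
    have hrel : Rel t ((σ ^ (j : ℤ)) x) ((σ ^ (i : ℤ)) x) :=
      rel_symm ((rel_iff_samePiece ht _ _).2 (pidx_eq_samePiece ht heq))
    have := rel_zpow hinv hinv' (-(j : ℤ)) hrel
    have harr : ∀ m n : ℤ, (σ ^ m) ((σ ^ n) x) = (σ ^ (m + n)) x := by
      intro m n; rw [zpow_add]; rfl
    rw [harr, harr] at this
    simpa [show -(j:ℤ) + j = 0 by ring, show -(j:ℤ) + i = ((i - j : ℕ) : ℤ) by omega]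
      using this

end Aux5
section Aux6
variable {N : ℕ} {t : Fin N → ℝ} {σ : Equiv.Perm ℝ}

variable (ht : StrictMono t) (hinv : AlgInvariant (pcAlgOn (Set.range t)) σ)
  (hinv' : AlgInvariant (pcAlgOn (Set.range t)) σ.symm)

lemma zpow_arr (σ : Equiv.Perm ℝ) (m n : ℤ) (x : ℝ) :
    (σ ^ m) ((σ ^ n) x) = (σ ^ (m + n)) x := by
  rw [zpow_add]; rfl

include hinv hinv'

lemma relZ_add {x : ℝ} {n m : ℤ} (hn : Rel t x ((σ ^ n) x)) (hm : Rel t x ((σ ^ m) x)) :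
    Rel t x ((σ ^ (n + m)) x) := by
  have := rel_zpow hinv hinv' n hm
  rw [zpow_arr] at this
  exact rel_trans hn this

lemma relZ_neg {x : ℝ} {n : ℤ} (hn : Rel t x ((σ ^ n) x)) :
    Rel t x ((σ ^ (-n)) x) := by
  have := rel_zpow hinv hinv' (-n) hn
  rw [zpow_arr, neg_add_cancel] at this
  simpa using rel_symm this

lemma relZ_shift (c : ℤ) {x : ℝ} {n : ℤ} (hn : Rel t x ((σ ^ n) x)) :
    Rel t ((σ ^ c) x) ((σ ^ n) ((σ ^ c) x)) := by
  have := rel_zpow hinv hinv' c hn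
  rw [zpow_arr, add_comm c n, ← zpow_arr] at this
  exact this

include ht

/-- the minimal positive return time of `x` -/
noncomputable def kmin (x : ℝ) : ℕ :=
  Nat.find (exists_return ht hinv hinv' x)

lemma kmin_pos (x : ℝ) : 0 < kmin ht hinv hinv' x :=
  (Nat.find_spec (exists_return ht hinv hinv' x)).1

lemma kmin_rel (x : ℝ) : Rel t x ((σ ^ (kmin ht hinv hinv' x : ℤ)) x) :=
  (Nat.find_spec (exists_return ht hinv hinv' x)).2

lemma relZ_iff_dvd (x : ℝ) (n : ℤ) :
    Rel t x ((σ ^ n) x) ↔ ((kmin ht hinv hinv' x : ℤ) ∣ n) := by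
  set k := kmin ht hinv hinv' x with hk
  have hkpos := kmin_pos ht hinv hinv' x
  have hkrel := kmin_rel ht hinv hinv' x
  have hmul : ∀ c : ℤ, Rel t x ((σ ^ (c * (k : ℤ))) x) := by
    intro c
    induction c using Int.induction_on with
    | zero => simpa using rel_refl x
    | succ m ih =>
        rw [show ((m : ℤ) + 1) * (k : ℤ) = m * k + k by ring]
        exact relZ_add hinv hinv' ih hkrel
    | pred m ih =>
        rw [show (-(m : ℤ) - 1) * (k : ℤ) = -(m : ℤ) * k + (-(k : ℤ)) by ring]
        exact relZ_add hinv hinv' ih (relZ_neg hinv hinv' hkrel)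
  constructor
  · intro hrel
    by_contra hdvd
    set r := n % (k : ℤ) with hr
    have hr0 : 0 ≤ r := Int.emod_nonneg n (by positivity)
    have hrk : r < (k : ℤ) := Int.emod_lt_of_pos n (by positivity)
    have hrne : r ≠ 0 := by
      intro h0
      exact hdvd (Int.dvd_of_emod_eq_zero h0)
    have hrrel : Rel t x ((σ ^ r) x) := by
      have h1 : Rel t x ((σ ^ (-(n / (k : ℤ)) * (k : ℤ))) x) := hmul _
      have := relZ_add hinv hinv' hrel h1
      rw [show n + -(n / (k : ℤ)) * (k : ℤ) = n % (k : ℤ) by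
        rw [Int.emod_def]; ring] at this
      exact this
    have : k ≤ r.toNat := by
      refine Nat.find_min' (exists_return ht hinv hinv' x) ⟨by omega, ?_⟩
      rw [show ((r.toNat : ℕ) : ℤ) = r by omega]
      exact hrrel
    omega
  · rintro ⟨c, rfl⟩
    rw [mul_comm]
    exact hmul c

lemma kmin_zpow (c : ℤ) (x : ℝ) :
    kmin ht hinv hinv' ((σ ^ c) x) = kmin ht hinv hinv' x := by
  have key : ∀ n : ℤ, Rel t x ((σ ^ n) x) ↔
      Rel t ((σ ^ c) x) ((σ ^ n) ((σ ^ c) x)) := by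
    intro n
    constructor
    · exact relZ_shift hinv hinv' c
    · intro h
      have := relZ_shift hinv hinv' (-c) h
      rw [zpow_arr, show -c + c = 0 by ring] at this
      simpa using this
  apply le_antisymm
  · refine Nat.find_le ⟨kmin_pos ht hinv hinv' x, (key _).1 (kmin_rel ht hinv hinv' x)⟩
  · refine Nat.find_le ⟨kmin_pos ht hinv hinv' _, (key _).2 (kmin_rel ht hinv hinv' _)⟩

lemma mem_Ck_iff (x : ℝ) (k : ℕ) :
    x ∈ Ck N t σ k ↔ k = kmin ht hinv hinv' x := by
  have hset : {j : ℕ | 0 < j ∧ ∃ P ∈ pieces N t, x ∈ P ∧ (σ ^ j) x ∈ P} =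
      {j : ℕ | 0 < j ∧ Rel t x ((σ ^ (j : ℤ)) x)} := by
    ext j
    simp only [Set.mem_setOf_eq, and_congr_right_iff]
    intro _
    rw [rel_iff_samePiece ht, zpow_natCast]
  have hleast : IsLeast {j : ℕ | 0 < j ∧ Rel t x ((σ ^ (j : ℤ)) x)}
      (kmin ht hinv hinv' x) := by
    constructor
    · exact ⟨kmin_pos ht hinv hinv' x, kmin_rel ht hinv hinv' x⟩
    · intro j hj
      exact Nat.find_le hj
  constructor
  · intro hx
    rw [Ck, Set.mem_setOf_eq, hset] at hx
    exact hx.unique hleast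
  · rintro rfl
    rw [Ck, Set.mem_setOf_eq, hset]
    exact hleast

end Aux6
section Aux7
variable {σ : Equiv.Perm ℝ}

lemma sum_single_apply (f : ℤ →₀ (ℝ → ℂ)) (F : ℤ → (ℝ → ℂ) → (ℝ → ℂ))
    (hF : ∀ n, F n 0 = 0) (n₀ : ℤ) :
    (f.sum fun n fn => Finsupp.single n (F n fn)) n₀ = F n₀ (f n₀) := by
  rw [Finsupp.sum_apply]
  rw [Finsupp.sum]
  by_cases hmem : n₀ ∈ f.support
  · rw [Finset.sum_eq_single n₀]
    · rw [Finsupp.single_apply, if_pos rfl]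
    · intro b _ hb
      rw [Finsupp.single_apply, if_neg hb]
    · intro h
      exact absurd hmem h
  · have h0 : f n₀ = 0 := Finsupp.notMem_support_iff.1 hmem
    rw [h0, hF]
    apply Finset.sum_eq_zero
    intro b hb
    have hb' : b ≠ n₀ := fun h => hmem (h ▸ hb)
    rw [Finsupp.single_apply, if_neg hb']

lemma cmul_single_zero_right (f : ℤ →₀ (ℝ → ℂ)) (a : ℝ → ℂ) (n₀ : ℤ) :
    (cmul σ f (Finsupp.single 0 a)) n₀ = fun x => f n₀ x * a ((σ ^ n₀)⁻¹ x) := by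
  unfold cmul
  have h1 : ∀ n : ℤ, ∀ fn : ℝ → ℂ,
      ((Finsupp.single (0:ℤ) a).sum fun m b =>
        Finsupp.single (n + m) (fun x => fn x * b ((σ ^ n)⁻¹ x))) =
      Finsupp.single n (fun x => fn x * a ((σ ^ n)⁻¹ x)) := by
    intro n fn
    rw [Finsupp.sum_single_index]
    · simp
    · simp only [Pi.zero_apply, mul_zero]
      exact Finsupp.single_zero _
  simp only [h1]
  exact sum_single_apply f _ (fun n => by simp only [Pi.zero_apply, zero_mul]; rfl) n₀

lemma cmul_single_zero_left (f : ℤ →₀ (ℝ → ℂ)) (a : ℝ → ℂ) (n₀ : ℤ) :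
    (cmul σ (Finsupp.single 0 a) f) n₀ = fun x => a x * f n₀ x := by
  unfold cmul
  rw [Finsupp.sum_single_index]
  · have : ∀ m : ℤ, ∀ fm : ℝ → ℂ, (Finsupp.single ((0:ℤ) + m)
        (fun x => a x * fm ((σ ^ (0:ℤ))⁻¹ x))) =
        Finsupp.single m (fun x => a x * fm x) := by
      intro m fm
      simp
    simp only [this]
    exact sum_single_apply f _ (fun n => by simp only [Pi.zero_apply, mul_zero]; rfl) n₀
  · rw [Finsupp.sum]
    apply Finset.sum_eq_zero
    intro m _
    have h0 : (fun x => (0 : ℝ → ℂ) x * f m ((σ ^ (0:ℤ))⁻¹ x)) = 0 := by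
      funext x; simp
    rw [h0]
    exact Finsupp.single_zero _
end Aux7
section Aux8
variable {N : ℕ} {t : Fin N → ℝ} {σ : Equiv.Perm ℝ}

lemma cmul_single_zero_right' (f : ℤ →₀ (ℝ → ℂ)) (a : ℝ → ℂ) (n₀ : ℤ) (x : ℝ) :
    (cmul σ f (Finsupp.single 0 a)) n₀ x = f n₀ x * a ((σ ^ n₀)⁻¹ x) :=
  congrFun (cmul_single_zero_right f a n₀) x

lemma cmul_single_zero_left' (f : ℤ →₀ (ℝ → ℂ)) (a : ℝ → ℂ) (n₀ : ℤ) (x : ℝ) :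
    (cmul σ (Finsupp.single 0 a) f) n₀ x = a x * f n₀ x :=
  congrFun (cmul_single_zero_left f a n₀) x

lemma cmul_apply (f g : ℤ →₀ (ℝ → ℂ)) (l : ℤ) (x : ℝ) :
    (cmul σ f g) l x = ∑ n ∈ f.support, ∑ m ∈ g.support,
      (if n + m = l then f n x * g m ((σ ^ n)⁻¹ x) else 0) := by
  rw [cmul, Finsupp.sum, Finsupp.finset_sum_apply, Finset.sum_apply]
  refine Finset.sum_congr rfl fun n _ => ?_
  rw [Finsupp.sum, Finsupp.finset_sum_apply, Finset.sum_apply]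
  refine Finset.sum_congr rfl fun m _ => ?_
  rw [Finsupp.single_apply]
  split_ifs <;> rfl

variable (ht : StrictMono t) (hinv : AlgInvariant (pcAlgOn (Set.range t)) σ)
  (hinv' : AlgInvariant (pcAlgOn (Set.range t)) σ.symm)
include ht hinv hinv'

lemma commutant_iff (f : ℤ →₀ (ℝ → ℂ)) :
    f ∈ commutant (pcAlgOn (Set.range t)) (pcAlgOn (Set.range t)) σ ↔
      InCrossed (pcAlgOn (Set.range t)) f ∧
        ∀ n : ℤ, ∀ x : ℝ, ¬ Rel t x ((σ ^ (-n)) x) → f n x = 0 := by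
  constructor
  · rintro ⟨hcr, hcomm⟩
    refine ⟨hcr, fun n x hrel => ?_⟩
    simp only [Rel, not_forall] at hrel
    obtain ⟨h, hh, hne⟩ := hrel
    have e2 := congrFun (Finsupp.ext_iff.1 (hcomm h hh) n) x
    rw [cmul_single_zero_right', cmul_single_zero_left'] at e2
    rw [zpow_neg] at hne
    by_contra hf0
    rw [mul_comm (h x)] at e2
    exact hne (mul_left_cancel₀ hf0 e2).symm
  · rintro ⟨hcr, hvan⟩
    refine ⟨hcr, fun a ha => ?_⟩
    ext n x
    rw [cmul_single_zero_right', cmul_single_zero_left']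
    by_cases hrel : Rel t x ((σ ^ (-n)) x)
    · have := hrel a ha
      rw [zpow_neg] at this
      rw [← this, mul_comm]
    · rw [hvan n x hrel]
      simp

end Aux8

/-- the unique maximal commutative subalgebra of `𝒜 ⋊_σ̃ ℤ` containing `𝒜`
is `𝒜' = {Σ fₙδⁿ : fₙ ≡ 0 on C_k whenever k ∤ n}`: the commutant equals this set, it is
commutative, and every commutative subalgebra of the crossed product containing `𝒜` is
contained in it. -/
theorem statement3 (N : ℕ) (t : Fin N → ℝ) (ht : StrictMono t) (σ : Equiv.Perm ℝ)
    (hinv : AlgInvariant (pcAlgOn (Set.range t)) σ)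
    (hinv' : AlgInvariant (pcAlgOn (Set.range t)) σ.symm) :
    commutant (pcAlgOn (Set.range t)) (pcAlgOn (Set.range t)) σ =
      {f : ℤ →₀ (ℝ → ℂ) | InCrossed (pcAlgOn (Set.range t)) f ∧
        ∀ n : ℤ, ∀ k : ℕ, 0 < k → ¬((k : ℤ) ∣ n) → ∀ x ∈ Ck N t σ k, f n x = 0} ∧
    (∀ f ∈ commutant (pcAlgOn (Set.range t)) (pcAlgOn (Set.range t)) σ,
      ∀ g ∈ commutant (pcAlgOn (Set.range t)) (pcAlgOn (Set.range t)) σ,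
        cmul σ f g = cmul σ g f) ∧
    (∀ S : Set (ℤ →₀ (ℝ → ℂ)),
      (∀ f ∈ S, InCrossed (pcAlgOn (Set.range t)) f) →
      (∀ a ∈ pcAlgOn (Set.range t), Finsupp.single (0 : ℤ) a ∈ S) →
      (∀ f ∈ S, ∀ g ∈ S, f + g ∈ S) →
      (∀ c : ℂ, ∀ f ∈ S, c • f ∈ S) →
      (∀ f ∈ S, ∀ g ∈ S, cmul σ f g ∈ S) →
      (∀ f ∈ S, ∀ g ∈ S, cmul σ f g = cmul σ g f) →
      S ⊆ commutant (pcAlgOn (Set.range t)) (pcAlgOn (Set.range t)) σ) := by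
  set A := pcAlgOn (Set.range t) with hA
  set K : ℝ → ℕ := kmin ht hinv hinv' with hK
  have hvan_iff : ∀ (n : ℤ) (x : ℝ),
      Rel t x ((σ ^ (-n)) x) ↔ ((K x : ℤ) ∣ n) := by
    intro n x
    rw [relZ_iff_dvd ht hinv hinv' x (-n), dvd_neg]
  have hchar : ∀ f : ℤ →₀ (ℝ → ℂ), f ∈ commutant A A σ ↔
      InCrossed A f ∧ ∀ (n : ℤ) (x : ℝ), ¬ ((K x : ℤ) ∣ n) → f n x = 0 := by
    intro f
    rw [commutant_iff ht hinv hinv' f]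
    simp only [hvan_iff]
    exact Iff.rfl
  have hpart1 : commutant A A σ =
      {f : ℤ →₀ (ℝ → ℂ) | InCrossed A f ∧
        ∀ n : ℤ, ∀ k : ℕ, 0 < k → ¬((k : ℤ) ∣ n) → ∀ x ∈ Ck N t σ k, f n x = 0} := by
    ext f
    rw [hchar f]
    simp only [Set.mem_setOf_eq]
    constructor
    · rintro ⟨hcr, hv⟩
      refine ⟨hcr, fun n k hk hdvd x hx => ?_⟩
      have hkx : k = K x := (mem_Ck_iff ht hinv hinv' x k).1 hx
      exact hv n x (hkx ▸ hdvd)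
    · rintro ⟨hcr, hv⟩
      refine ⟨hcr, fun n x hdvd => ?_⟩
      exact hv n (K x) (kmin_pos ht hinv hinv' x) hdvd x
        ((mem_Ck_iff ht hinv hinv' x (K x)).2 rfl)
  refine ⟨hpart1, ?_, ?_⟩
  · -- commutativity of the commutant
    intro f hf g hg
    obtain ⟨hfc, hfv⟩ := (hchar f).1 hf
    obtain ⟨hgc, hgv⟩ := (hchar g).1 hg
    have key : ∀ (n m : ℤ) (x : ℝ),
        f n x * g m ((σ ^ n)⁻¹ x) = g m x * f n ((σ ^ m)⁻¹ x) := by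
      intro n m x
      by_cases hn : (K x : ℤ) ∣ n
      · by_cases hm : (K x : ℤ) ∣ m
        · have hreln : Rel t x ((σ ^ (-n)) x) := (hvan_iff n x).2 hn
          have hrelm : Rel t x ((σ ^ (-m)) x) := (hvan_iff m x).2 hm
          have e1 := hreln (g m) (hgc m)
          have e2 := hrelm (f n) (hfc n)
          rw [zpow_neg] at e1 e2
          rw [← e1, ← e2, mul_comm]
        · have hyx : K ((σ ^ (-n)) x) = K x := kmin_zpow ht hinv hinv' (-n) x
          have hz : g m ((σ ^ (-n)) x) = 0 := hgv m _ (by rw [hyx]; exact hm)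
          rw [zpow_neg] at hz
          rw [hz, hgv m x hm, mul_zero, zero_mul]
      · have hyx : K ((σ ^ (-m)) x) = K x := kmin_zpow ht hinv hinv' (-m) x
        have hz : f n ((σ ^ (-m)) x) = 0 := hfv n _ (by rw [hyx]; exact hn)
        rw [zpow_neg] at hz
        rw [hz, hfv n x hn, mul_zero, zero_mul]
    apply Finsupp.ext
    intro l
    funext x
    rw [cmul_apply, cmul_apply, Finset.sum_comm]
    refine Finset.sum_congr rfl fun m hm => Finset.sum_congr rfl fun n hn => ?_
    rw [add_comm m n]
    by_cases hl : n + m = l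
    · rw [if_pos hl, if_pos hl, key]
    · rw [if_neg hl, if_neg hl]
  · -- maximality
    intro S h1 h2 _ _ _ h6 f hf
    exact ⟨h1 f hf, fun a ha => h6 f hf _ (h2 a ha)⟩

end PaperTRS
end
end

section
/- Suppose p of the additional jump points lie in the open interval I_α and q of them lie in the open interval I_β (and these account for all added points in I_α and I_β). If σ : ℝ → ℝ is a bijection such that 𝒜_S is invariant under σ and σ(I_α) = I_β, then p = q. -/
open scoped Classical

noncomputable section

/-!
Invariance of `𝒜_S` under `σ` forces `σ` to permute the finite jump set `T = {t_α} ∪ S`: for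
`τ ∈ T` the indicator of `{τ}` lies in `𝒜_S`, its pullback under `σ` is the indicator of
`{σ⁻¹ τ}`, and an indicator of a point lies in `𝒜_S` only if that point is a jump point.
No `t_α` lies in an open interval `I_c`, so the added points in `I_c` are exactly `T ∩ I_c`,
and `σ` maps `T ∩ I_a` bijectively onto `T ∩ I_b`.
-/

namespace PaperTRS

lemma indicator_singleton_mem_pcAlgOn {T : Set ℝ} {τ : ℝ} (hτ : τ ∈ T) :
    (fun x : ℝ => if x = τ then (1 : ℂ) else 0) ∈ pcAlgOn T := by
  intro x y hx hy _
  simp [show x ≠ τ from fun h => hx (h ▸ hτ), show y ≠ τ from fun h => hy (h ▸ hτ)]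

/-- A point off a closed jump set has a right neighbourhood `[w, y]` free of jumps, on which
the indicator of `{w}` would have to be constant. -/
lemma mem_of_indicator_singleton_mem_pcAlgOn {T : Set ℝ} (hT : IsClosed T) {w : ℝ}
    (h : (fun x : ℝ => if x = w then (1 : ℂ) else 0) ∈ pcAlgOn T) : w ∈ T := by
  by_contra hw
  obtain ⟨ε, hε, hball⟩ := Metric.isOpen_iff.1 hT.isOpen_compl w hw
  have hwy : w < w + ε / 2 := by linarith
  have hfree : Set.Icc w (w + ε / 2) ⊆ Tᶜ := fun u hu =>
    hball <| Metric.closedBall_subset_ball (half_lt_self hε) <| by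
      rw [Real.closedBall_eq_Icc]
      exact Set.Icc_subset_Icc (by linarith) le_rfl hu
  have hconst := h w (w + ε / 2) hw (hfree ⟨hwy.le, le_rfl⟩) fun u hu hmem => by
    rw [min_eq_left hwy.le, max_eq_right hwy.le] at hmem
    exact hfree hmem hu
  simp [hwy.ne'] at hconst

lemma AlgInvariant.mapsTo_symm {T : Set ℝ} (hT : IsClosed T) {σ : Equiv.Perm ℝ}
    (hσ : AlgInvariant (pcAlgOn T) σ) : Set.MapsTo σ.symm T T := by
  intro τ hτ
  have hcomp : (fun x : ℝ => if x = τ then (1 : ℂ) else 0) ∘ σ =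
      fun x => if x = σ.symm τ then 1 else 0 := by
    funext x
    simp only [Function.comp_apply, ← Equiv.eq_symm_apply]
  exact mem_of_indicator_singleton_mem_pcAlgOn hT
    (hcomp ▸ hσ _ (indicator_singleton_mem_pcAlgOn hτ))

lemma AlgInvariant.image_eq {T : Set ℝ} (hT : T.Finite) {σ : Equiv.Perm ℝ}
    (hσ : AlgInvariant (pcAlgOn T) σ) : σ '' T = T := by
  have hsub : T ⊆ σ '' T := by
    rw [Equiv.image_eq_preimage_symm]
    exact hσ.mapsTo_symm hT.isClosed
  exact (Set.eq_of_subset_of_ncard_le hsub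
    (Set.ncard_image_of_injective T σ.injective).le (hT.image σ)).symm

lemma monotone_tE {N : ℕ} {t : Fin N → ℝ} (ht : Monotone t) : Monotone (tE N t) := by
  intro i j hij
  unfold tE
  split_ifs <;> first
    | omega
    | exact EReal.coe_le_coe_iff.2 (ht (Fin.mk_le_mk.2 (by omega)))
    | simp

lemma tE_succ {N : ℕ} (t : Fin N → ℝ) (j : Fin N) : tE N t (j + 1) = t j := by
  simp [tE]

lemma t_notMem_openPiece {N : ℕ} {t : Fin N → ℝ} (ht : Monotone t) (b : ℕ) (j : Fin N) :
    t j ∉ openPiece N t b := by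
  rintro ⟨hlo, hhi⟩
  rw [← tE_succ] at hlo hhi
  rcases le_or_gt (j + 1 : ℕ) b with hjb | hbj
  · exact (monotone_tE ht hjb).not_gt hlo
  · exact (monotone_tE ht (Nat.succ_le_of_lt hbj)).not_gt hhi

theorem statement7_general (N : ℕ) (t : Fin N → ℝ) (ht : StrictMono t)
    (m : ℕ) (s : Fin m → ℝ) (hs : Function.Injective s)
    (σ : Equiv.Perm ℝ)
    (hAS : AlgInvariant (pcAlgOn (Set.range t ∪ Set.range s)) σ)
    (a b : ℕ)
    (hmap : σ '' openPiece N t a = openPiece N t b) :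
    ({i : Fin m | s i ∈ openPiece N t a} : Set (Fin m)).ncard =
      ({i : Fin m | s i ∈ openPiece N t b} : Set (Fin m)).ncard := by
  set T := Set.range t ∪ Set.range s
  have hT : σ '' T = T := hAS.image_eq ((Set.finite_range t).union (Set.finite_range s))
  have hcount : ∀ c, ({i | s i ∈ openPiece N t c} : Set (Fin m)).ncard =
      (T ∩ openPiece N t c).ncard := by
    intro c
    rw [← Set.ncard_image_of_injective _ hs]
    congr 1
    ext x
    constructor
    · rintro ⟨i, hi, rfl⟩
      exact ⟨Or.inr ⟨i, rfl⟩, hi⟩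
    · rintro ⟨⟨j, rfl⟩ | ⟨i, rfl⟩, hx⟩
      · exact absurd hx (t_notMem_openPiece ht.monotone c j)
      · exact ⟨i, hx, rfl⟩
  have hpiece : σ '' (T ∩ openPiece N t a) = T ∩ openPiece N t b := by
    rw [Set.image_inter σ.injective, hT, hmap]
  rw [hcount a, hcount b, ← hpiece, Set.ncard_image_of_injective _ σ.injective]

/-- if `𝒜_S` is invariant under a bijection `σ` with `σ(I_α) = I_β`, then the
number of added jump points lying in `I_α` equals the number of added jump points lying
in `I_β`. -/
theorem statement7 (N : ℕ) (t : Fin N → ℝ) (ht : StrictMono t)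
    (m : ℕ) (s : Fin m → ℝ) (hs : Function.Injective s)
    (hst : ∀ i, s i ∉ Set.range t)
    (σ : Equiv.Perm ℝ)
    (hAS : AlgInvariant (pcAlgOn (Set.range t ∪ Set.range s)) σ)
    (a b : ℕ) (ha : a ≤ N) (hb : b ≤ N)
    (hmap : σ '' openPiece N t a = openPiece N t b) :
    ({i : Fin m | s i ∈ openPiece N t a} : Set (Fin m)).ncard =
      ({i : Fin m | s i ∈ openPiece N t b} : Set (Fin m)).ncard :=
  statement7_general N t ht m s hs σ hAS a b hmap

end PaperTRS
end
end
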